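/- arXiv:2102.03003 — 2 statements merged into one kernel-verified Lean document; each statement's English description precedes it below -/
import Mathlib

section
/- Let Q = ∏ᵢ qᵢ be a squarefree product of nonzero real polynomials q₁,…,qₙ, let B be a positive real number strictly larger in absolute value than every real root of Q, and define p = (X − B)(X + B)·Q'. Then every sign assignment for (q₁,…,qₙ) with all signs nonzero that is consistent (realized at some x ∈ ℝ) is realized at some real root of p. -/
open Polynomial

lemma sign_eq_of_no_root' (f : Polynomial ℝ) (x y : ℝ)
    (h : ∀ t ∈ Set.uIcc x y, f.eval t ≠ 0) :
    Real.sign (f.eval x) = Real.sign (f.eval y) := by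
  have hx := h x Set.left_mem_uIcc
  have hy := h y Set.right_mem_uIcc
  have hiv : Set.uIcc (f.eval x) (f.eval y) ⊆ (fun t => f.eval t) '' Set.uIcc x y :=
    intermediate_value_uIcc f.continuous.continuousOn
  rcases hx.lt_or_gt with hx1 | hx1 <;> rcases hy.lt_or_gt with hy1 | hy1
  · rw [Real.sign_of_neg hx1, Real.sign_of_neg hy1]
  · exfalso
    obtain ⟨t, ht, ht0⟩ := hiv (by rw [Set.mem_uIcc]; exact Or.inl ⟨hx1.le, hy1.le⟩)
    exact h t ht ht0
  · exfalso
    obtain ⟨t, ht, ht0⟩ := hiv (by rw [Set.mem_uIcc]; exact Or.inr ⟨hy1.le, hx1.le⟩)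
    exact h t ht ht0
  · rw [Real.sign_of_pos hx1, Real.sign_of_pos hy1]

theorem nonzero_sign_assignment_realized_at_root (n : ℕ)
    (q : Fin n → Polynomial ℝ) (hq : ∀ i, q i ≠ 0)
    (hsf : Squarefree (∏ i, q i)) (B : ℝ) (hB : 0 < B)
    (hroots : ∀ r : ℝ, (∏ i, q i).eval r = 0 → |r| < B)
    (p : Polynomial ℝ)
    (hp : p = (X - C B) * (X + C B) * derivative (∏ i, q i))
    (σ : Fin n → ℝ) (hσ : ∀ i, σ i = 1 ∨ σ i = -1)
    (hreal : ∃ x : ℝ, ∀ i, Real.sign ((q i).eval x) = σ i) :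
    ∃ x : ℝ, p.eval x = 0 ∧ ∀ i, Real.sign ((q i).eval x) = σ i := by
  obtain ⟨x₀, hx₀⟩ := hreal
  set Q : Polynomial ℝ := ∏ i, q i with hQ
  have hQ0 : Q ≠ 0 := Finset.prod_ne_zero_iff.mpr (fun i _ => hq i)
  have hqx₀ : ∀ i, (q i).eval x₀ ≠ 0 := by
    intro i h
    have h2 := hx₀ i
    rw [h, Real.sign_zero] at h2
    rcases hσ i with h1 | h1 <;> rw [h1] at h2 <;> norm_num at h2
  have hQx₀ : Q.eval x₀ ≠ 0 := by
    rw [hQ, Polynomial.eval_prod]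
    exact Finset.prod_ne_zero_iff.mpr fun i _ => hqx₀ i
  have key : ∀ x : ℝ, (∀ t ∈ Set.uIcc x₀ x, Q.eval t ≠ 0) →
      ∀ i, Real.sign ((q i).eval x) = σ i := by
    intro x hx i
    rw [← hx₀ i]
    refine (sign_eq_of_no_root' _ _ _ ?_).symm
    intro t ht h0
    exact hx t ht (by rw [hQ, eval_prod]; exact Finset.prod_eq_zero (Finset.mem_univ i) h0)
  set S : Finset ℝ := Q.roots.toFinset with hS
  have hmemS : ∀ t : ℝ, t ∈ S ↔ Q.eval t = 0 := by
    intro t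
    rw [hS, Multiset.mem_toFinset, Polynomial.mem_roots hQ0]
    exact Iff.rfl
  by_cases hAe : ∃ t ∈ S, t < x₀
  · by_cases hBe : ∃ t ∈ S, x₀ < t
    · -- both sides: Rolle
      obtain ⟨a0, ha0S, ha0⟩ := hAe
      obtain ⟨b0, hb0S, hb0⟩ := hBe
      have hAne : (S.filter (fun x => x < x₀)).Nonempty := ⟨a0, Finset.mem_filter.mpr ⟨ha0S, ha0⟩⟩
      have hBne : (S.filter (fun x => x₀ < x)).Nonempty := ⟨b0, Finset.mem_filter.mpr ⟨hb0S, hb0⟩⟩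
      set a := (S.filter (fun x => x < x₀)).max' hAne with ha_def
      set b := (S.filter (fun x => x₀ < x)).min' hBne with hb_def
      have haMem := Finset.mem_filter.mp ((S.filter (fun x => x < x₀)).max'_mem hAne)
      have hbMem := Finset.mem_filter.mp ((S.filter (fun x => x₀ < x)).min'_mem hBne)
      have hab : a < b := lt_trans haMem.2 hbMem.2
      have noroot : ∀ t : ℝ, a < t → t < b → Q.eval t ≠ 0 := by
        intro t hat htb h0
        have htS : t ∈ S := (hmemS t).mpr h0
        rcases lt_trichotomy t x₀ with h | h | h
        · have hmem : t ∈ S.filter (fun x => x < x₀) := Finset.mem_filter.mpr ⟨htS, h⟩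
          have : t ≤ a := Finset.le_max' _ t hmem
          linarith
        · rw [h] at h0; exact hQx₀ h0
        · have hmem : t ∈ S.filter (fun x => x₀ < x) := Finset.mem_filter.mpr ⟨htS, h⟩
          have : b ≤ t := Finset.min'_le _ t hmem
          linarith
      have hQa : Q.eval a = 0 := (hmemS a).mp haMem.1
      have hQb : Q.eval b = 0 := (hmemS b).mp hbMem.1
      obtain ⟨c, hc, hc0⟩ := exists_deriv_eq_zero (f := fun x => Q.eval x) hab
        Q.continuous.continuousOn (by show Q.eval a = Q.eval b; rw [hQa, hQb])
      rw [Polynomial.deriv] at hc0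
      refine ⟨c, ?_, ?_⟩
      · rw [hp]; simp [← hQ, hc0]
      · apply key
        intro t ht h0
        rw [Set.mem_uIcc] at ht
        have hx₀I : a < x₀ ∧ x₀ < b := ⟨haMem.2, hbMem.2⟩
        rcases ht with ⟨h1, h2⟩ | ⟨h1, h2⟩ <;>
          exact noroot t (by cases hc; linarith) (by cases hc; linarith) h0
    · -- all roots < x₀ : use B
      push_neg at hBe
      refine ⟨B, ?_, ?_⟩
      · rw [hp]; simp
      · apply key
        intro t ht h0
        have htB : |t| < B := hroots t (h0)
        have htS : t ∈ S := (hmemS t).mpr h0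
        have h1 : ¬ x₀ < t := not_lt.mpr (hBe t htS)
        have h2 : t ≠ x₀ := fun h => hQx₀ (h ▸ h0)
        have h3 : t < B := (abs_lt.mp htB).2
        rw [Set.mem_uIcc] at ht
        have h4 := lt_of_le_of_ne (not_lt.mp h1) h2
        rcases ht with ⟨hl, hr⟩ | ⟨hl, hr⟩ <;> linarith
  · -- all roots > x₀ : use -B
    push_neg at hAe
    refine ⟨-B, ?_, ?_⟩
    · rw [hp]; simp
    · apply key
      intro t ht h0
      have htB : |t| < B := hroots t (h0)
      have htS : t ∈ S := (hmemS t).mpr h0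
      have h1 : ¬ t < x₀ := not_lt.mpr (hAe t htS)
      have h2 : t ≠ x₀ := fun h => hQx₀ (h ▸ h0)
      have h3 : -B < t := (abs_lt.mp htB).1
      rw [Set.mem_uIcc] at ht
      rcases ht with ⟨hl, hr⟩ | ⟨hl, hr⟩
      · linarith
      · have := lt_of_le_of_ne (not_lt.mp h1) (Ne.symm h2)
        linarith
end

section
/- Matrix equation theorem (BKR): Let p ≠ 0 be a real polynomial and q₁,…,qₙ real polynomials each coprime with p. Let σ₁,…,σₘ be distinct sign assignments (Fin n → {−1,1}) containing all sign vectors realized at roots of p, and let I₁,…,I_l ⊆ Fin n. Define the l×m matrix M by M(i,j) = ∏_{k ∈ Iᵢ} σⱼ(k), the vector w ∈ ℤ^m by wⱼ = #{x : p(x)=0 ∧ ∀k, sign(q_k(x)) = σⱼ(k)}, and v ∈ ℤ^l by vᵢ = N(p, ∏_{k ∈ Iᵢ} q_k). Then M · w = v. -/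
/-!
Both sides are sums over the finite set of real roots of `p`. The `i`-th entry of the right-hand
side is `∑ x, sign (∏ k ∈ I i, q k (x)) = ∑ x, ∏ k ∈ I i, sign (q k (x))`, and the sign vector
`k ↦ sign (q k (x))` of every root equals exactly one `σ j`; grouping the roots by it turns the
sum into `∑ j, (∏ k ∈ I i, σ j k) * #{roots with sign vector σ j}`.
-/

open Polynomial Finset

lemma Real.sign_eq_coe_sign (r : ℝ) : Real.sign r = (SignType.sign r : ℝ) := by
  rcases lt_trichotomy r 0 with hr | rfl | hr
  · simp [Real.sign_of_neg hr, hr]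
  · simp [Real.sign_zero]
  · simp [Real.sign_of_pos hr, hr]

lemma Real.sign_prod {ι : Type*} (s : Finset ι) (f : ι → ℝ) :
    Real.sign (∏ i ∈ s, f i) = ∏ i ∈ s, Real.sign (f i) := by
  simp only [Real.sign_eq_coe_sign]
  exact map_prod (SignType.castHom.comp signHom) f s

lemma Finset.sum_sign_eq_card_pos_sub_card_neg {ι : Type*} (s : Finset ι) (f : ι → ℝ) :
    ∑ i ∈ s, Real.sign (f i) = (#{i ∈ s | 0 < f i} : ℝ) - #{i ∈ s | f i < 0} := by
  have h : ∀ i, Real.sign (f i) = (if 0 < f i then 1 else 0) - (if f i < 0 then 1 else 0) := by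
    intro i
    rcases lt_trichotomy (f i) 0 with hf | hf | hf
    · simp [Real.sign_of_neg hf, hf, hf.not_gt]
    · simp [hf, Real.sign_zero]
    · simp [Real.sign_of_pos hf, hf, hf.not_gt]
  simp only [h, sum_sub_distrib, sum_boole]

lemma Finset.sum_comp_eq_sum_card_smul_of_injective {α β ι M : Type*} [Fintype ι]
    [DecidableEq β] [AddCommMonoid M] (s : Finset α) (g : α → β) {σ : ι → β}
    (hσ : σ.Injective) (hs : ∀ x ∈ s, ∃ j, g x = σ j) (F : β → M) :
    ∑ x ∈ s, F (g x) = ∑ j, #{x ∈ s | g x = σ j} • F (σ j) := by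
  have hmaps : ∀ x ∈ s, g x ∈ univ.map ⟨σ, hσ⟩ := fun x hx => by
    obtain ⟨j, hj⟩ := hs x hx
    exact mem_map.2 ⟨j, mem_univ j, hj.symm⟩
  rw [← sum_fiberwise_of_maps_to' hmaps, sum_map]
  simp only [sum_const, Function.Embedding.coeFn_mk]

lemma Polynomial.ncard_setOf_eval_eq_zero_and {R : Type*} [CommRing R] [IsDomain R]
    [DecidableEq R] {p : R[X]} (hp : p ≠ 0) (P : R → Prop) [DecidablePred P] :
    {x | p.eval x = 0 ∧ P x}.ncard = #{x ∈ p.roots.toFinset | P x} := by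
  rw [← Set.ncard_coe_finset]
  congr 1
  ext x
  simp [mem_roots hp, and_comm]

theorem matrix_equation_general (p : Polynomial ℝ) (hp : p ≠ 0)
    (n m l : ℕ) (q : Fin n → Polynomial ℝ)
    (σ : Fin m → Fin n → ℝ)
    (hdist : Function.Injective σ)
    (hall : ∀ x : ℝ, p.eval x = 0 → ∃ j, ∀ k, Real.sign ((q k).eval x) = σ j k)
    (I : Fin l → Finset (Fin n)) :
    (Matrix.of fun (i : Fin l) (j : Fin m) => ∏ k ∈ I i, σ j k).mulVec
      (fun j : Fin m =>
        ({x : ℝ | p.eval x = 0 ∧ ∀ k, Real.sign ((q k).eval x) = σ j k}.ncard : ℝ)) =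
    (fun i : Fin l =>
      ({x : ℝ | p.eval x = 0 ∧ (∏ k ∈ I i, q k).eval x > 0}.ncard : ℝ) -
      ({x : ℝ | p.eval x = 0 ∧ (∏ k ∈ I i, q k).eval x < 0}.ncard : ℝ)) := by
  have hcover : ∀ x ∈ p.roots.toFinset, ∃ j, (fun k => Real.sign ((q k).eval x)) = σ j :=
    fun x hx => by
      obtain ⟨j, hj⟩ := hall x ((mem_roots hp).1 (Multiset.mem_toFinset.1 hx))
      exact ⟨j, funext hj⟩
  ext i
  -- `← funext_iff` folds `∀ k, sign (q k (x)) = σ j k` into an equality of sign vectors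
  simp only [Matrix.mulVec, dotProduct, Matrix.of_apply, gt_iff_lt,
    ncard_setOf_eval_eq_zero_and hp, ← sum_sign_eq_card_pos_sub_card_neg, eval_prod,
    Real.sign_prod, ← funext_iff]
  rw [sum_comp_eq_sum_card_smul_of_injective _ _ hdist hcover fun v => ∏ k ∈ I i, v k]
  simp only [nsmul_eq_mul, mul_comm]

theorem matrix_equation (p : Polynomial ℝ) (hp : p ≠ 0)
    (n m l : ℕ) (q : Fin n → Polynomial ℝ)
    (hq : ∀ k, IsCoprime p (q k))
    (σ : Fin m → Fin n → ℝ)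
    (hdist : Function.Injective σ)
    (hval : ∀ j k, σ j k = 1 ∨ σ j k = -1)
    (hall : ∀ x : ℝ, p.eval x = 0 → ∃ j, ∀ k, Real.sign ((q k).eval x) = σ j k)
    (I : Fin l → Finset (Fin n)) :
    (Matrix.of fun (i : Fin l) (j : Fin m) => ∏ k ∈ I i, σ j k).mulVec
      (fun j : Fin m =>
        ({x : ℝ | p.eval x = 0 ∧ ∀ k, Real.sign ((q k).eval x) = σ j k}.ncard : ℝ)) =
    (fun i : Fin l =>
      ({x : ℝ | p.eval x = 0 ∧ (∏ k ∈ I i, q k).eval x > 0}.ncard : ℝ) -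
      ({x : ℝ | p.eval x = 0 ∧ (∏ k ∈ I i, q k).eval x < 0}.ncard : ℝ)) :=
  matrix_equation_general p hp n m l q σ hdist hall I
end
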